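/- arXiv:2105.02326 — 9 statements merged into one kernel-verified Lean document; each statement's English description precedes it below -/
import Mathlib

section
/- Let G be an abelian group with an element g0 of order at least 3. If φ is a permutation of G fixing the identity and satisfying φ(gh) ∈ {φ(g)h, φ(g)h^{-1}} for all g, h ∈ G, then φ is either the identity or the inversion map g ↦ g^{-1}. -/
/-!
Taking `g = 1` shows `φ g ∈ {g, g⁻¹}` for every `g`. If `φ a = a` with `a² ≠ 1`, then for every `h`
the two constraints `φ (a * h) ∈ {a * h, a * h⁻¹}` and `φ (a * h) ∈ {a * h, a⁻¹ * h⁻¹}` meet only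
in `a * h`, so `φ` is the identity. The inversion case reduces to this one, since `g ↦ (φ g)⁻¹`
satisfies the same hypotheses.
-/

section CommGroup

variable {G : Type*} [CommGroup G] {φ : G → G}

lemma apply_eq_self_or_inv (hφ1 : φ 1 = 1)
    (hφ : ∀ g h : G, φ (g * h) = φ g * h ∨ φ (g * h) = φ g * h⁻¹) (g : G) :
    φ g = g ∨ φ g = g⁻¹ := by
  simpa [hφ1] using hφ 1 g

lemma inv_apply_mul_eq_or (hφ : ∀ g h : G, φ (g * h) = φ g * h ∨ φ (g * h) = φ g * h⁻¹)
    (g h : G) : (φ (g * h))⁻¹ = (φ g)⁻¹ * h ∨ (φ (g * h))⁻¹ = (φ g)⁻¹ * h⁻¹ := by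
  rcases hφ g h with e | e <;> simp [e, mul_comm]

lemma eq_self_of_apply_eq_self (hφ1 : φ 1 = 1)
    (hφ : ∀ g h : G, φ (g * h) = φ g * h ∨ φ (g * h) = φ g * h⁻¹)
    {a : G} (ha : φ a = a) (ha2 : a ^ 2 ≠ 1) (g : G) : φ g = g := by
  have key : ∀ h, φ (a * h) = a * h := by
    intro h
    rcases apply_eq_self_or_inv hφ1 hφ (a * h) with e | e
    · exact e
    rcases hφ a h with e' | e'
    · rwa [ha] at e'
    · rw [ha, e, mul_inv] at e'
      have : a⁻¹ = a := mul_right_cancel e'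
      exact absurd (by rw [sq, mul_eq_one_iff_eq_inv, this]) ha2
  simpa using key (a⁻¹ * g)

lemma eq_inv_of_apply_eq_inv (hφ1 : φ 1 = 1)
    (hφ : ∀ g h : G, φ (g * h) = φ g * h ∨ φ (g * h) = φ g * h⁻¹)
    {a : G} (ha : φ a = a⁻¹) (ha2 : a ^ 2 ≠ 1) (g : G) : φ g = g⁻¹ :=
  inv_eq_iff_eq_inv.mp <| eq_self_of_apply_eq_self (φ := fun g ↦ (φ g)⁻¹) (by simp [hφ1])
    (inv_apply_mul_eq_or hφ) (by simp [ha]) ha2 g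

end CommGroup

theorem xi_of_abelian_general {G : Type*} [CommGroup G] (g0 : G)
    (hg0' : g0 ^ 2 ≠ 1)
    (φ : Equiv.Perm G) (hφ1 : φ 1 = 1)
    (hφ : ∀ g h : G, φ (g * h) = φ g * h ∨ φ (g * h) = φ g * h⁻¹) :
    (∀ g : G, φ g = g) ∨ (∀ g : G, φ g = g⁻¹) := by
  rcases apply_eq_self_or_inv hφ1 hφ g0 with h0 | h0
  · exact .inl (eq_self_of_apply_eq_self hφ1 hφ h0 hg0')
  · exact .inr (eq_inv_of_apply_eq_inv hφ1 hφ h0 hg0')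

/-- If `G` is abelian with an element of order at least 3, any colour-preserving
permutation of the complete Cayley graph fixing `1` is the identity or inversion. -/
theorem xi_of_abelian {G : Type*} [CommGroup G] (g0 : G)
    (hg0 : g0 ≠ 1) (hg0' : g0 ^ 2 ≠ 1)
    (φ : Equiv.Perm G) (hφ1 : φ 1 = 1)
    (hφ : ∀ g h : G, φ (g * h) = φ g * h ∨ φ (g * h) = φ g * h⁻¹) :
    (∀ g : G, φ g = g) ∨ (∀ g : G, φ g = g⁻¹) :=
  xi_of_abelian_general g0 hg0' φ hφ1 hφ
end

section
/- Let G be an abelian group with an element of order at least 3. Then the group of permutations φ of G satisfying φ(gh) ∈ {φ(g)h, φ(g)h^{-1}} for all g, h ∈ G is exactly the semidirect product of G (acting by left translations) with the order-2 group generated by the inversion map; in particular it contains G as a subgroup of index 2. -/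
/-!
Composing with a left translation we may assume `φ 1 = 1`, and then `φ h ∈ {h, h⁻¹}` for all `h`.
Take `x` with `x ^ 2 ≠ 1`. If `φ x = x`, then for every `b` the value `φ (x * b)` lies in
`{x * b, x * b⁻¹}` and in `{x * b, x⁻¹ * b⁻¹}`, and the last two differ, so `φ (x * b) = x * b`:
`φ` is the identity. If `φ x = x⁻¹`, the same applies to `g ↦ (φ g)⁻¹`, so `φ` is the inversion.
-/

def IsColourPreserving {G : Type*} [Group G] (φ : G → G) : Prop :=
  ∀ g h : G, φ (g * h) = φ g * h ∨ φ (g * h) = φ g * h⁻¹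

namespace IsColourPreserving

section Group

variable {G : Type*} [Group G] {φ : G → G}

theorem id : IsColourPreserving (id : G → G) := fun _ _ => Or.inl rfl

theorem const_mul (hφ : IsColourPreserving φ) (a : G) :
    IsColourPreserving (fun g => a * φ g) := by
  intro g h
  rcases hφ g h with e | e <;> simp only [e, mul_assoc, true_or, or_true]

theorem apply_eq_or_eq_inv (hφ : IsColourPreserving φ) (h1 : φ 1 = 1) (g : G) :
    φ g = g ∨ φ g = g⁻¹ := by
  simpa only [one_mul, h1] using hφ 1 g

end Group

section CommGroup

variable {G : Type*} [CommGroup G] {φ : G → G}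

theorem inv (hφ : IsColourPreserving φ) : IsColourPreserving (fun g => (φ g)⁻¹) := by
  intro g h
  rcases hφ g h with e | e <;> simp only [e, mul_inv, inv_inv, true_or, or_true]

theorem eq_self_of_apply_eq_self (hφ : IsColourPreserving φ) (h1 : φ 1 = 1) {x : G}
    (hx : φ x = x) (hx2 : x ^ 2 ≠ 1) (g : G) : φ g = g := by
  obtain ⟨b, rfl⟩ : ∃ b, x * b = g := ⟨x⁻¹ * g, mul_inv_cancel_left x g⟩
  rcases hφ x b with e | e
  · rwa [hx] at e
  rcases hφ.apply_eq_or_eq_inv h1 (x * b) with e' | e'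
  · exact e'
  rw [hx, e', mul_inv] at e
  exact absurd (by rw [sq, mul_eq_one_iff_eq_inv, mul_right_cancel e]) hx2

theorem eq_inv_of_apply_eq_inv (hφ : IsColourPreserving φ) (h1 : φ 1 = 1) {x : G}
    (hx : φ x = x⁻¹) (hx2 : x ^ 2 ≠ 1) (g : G) : φ g = g⁻¹ :=
  inv_eq_iff_eq_inv.mp <| hφ.inv.eq_self_of_apply_eq_self (by simp [h1]) (by simp [hx]) hx2 g

theorem exists_eq_mul_or_eq_mul_inv (hφ : IsColourPreserving φ) {x : G} (hx2 : x ^ 2 ≠ 1) :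
    ∃ a : G, (∀ g, φ g = a * g) ∨ (∀ g, φ g = a * g⁻¹) := by
  have hψ := hφ.const_mul (φ 1)⁻¹
  have hψ1 : (φ 1)⁻¹ * φ 1 = 1 := inv_mul_cancel _
  refine ⟨φ 1, ?_⟩
  rcases hψ.apply_eq_or_eq_inv hψ1 x with hx | hx
  · exact .inl fun g => inv_mul_eq_iff_eq_mul.mp (hψ.eq_self_of_apply_eq_self hψ1 hx hx2 g)
  · exact .inr fun g => inv_mul_eq_iff_eq_mul.mp (hψ.eq_inv_of_apply_eq_inv hψ1 hx hx2 g)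

end CommGroup

end IsColourPreserving

theorem mul_inv_ne_mul_of_sq_ne_one {G : Type*} [Group G] {x : G} (hx2 : x ^ 2 ≠ 1) (a b : G) :
    (fun g : G => a * g⁻¹) ≠ (fun g : G => b * g) := by
  intro e
  have hab : a = b := by simpa using congrFun e 1
  have hx : a * x⁻¹ = a * x := by simpa [hab] using congrFun e x
  exact hx2 (by rw [sq, mul_eq_one_iff_eq_inv, mul_left_cancel hx])

theorem Xi_of_abelian_general {G : Type*} [CommGroup G] (g0 : G)
    (hg0' : g0 ^ 2 ≠ 1) :
    (∀ φ : Equiv.Perm G,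
      (∀ g h : G, φ (g * h) = φ g * h ∨ φ (g * h) = φ g * h⁻¹) ↔
        ∃ a : G, (∀ g : G, φ g = a * g) ∨ (∀ g : G, φ g = a * g⁻¹)) ∧
    (∀ a b : G, (fun g : G => a * g⁻¹) ≠ (fun g : G => b * g)) := by
  refine ⟨fun φ => ⟨fun hφ => IsColourPreserving.exists_eq_mul_or_eq_mul_inv hφ hg0', ?_⟩,
    mul_inv_ne_mul_of_sq_ne_one hg0'⟩
  rintro ⟨a, h | h⟩
  · rw [show ⇑φ = fun g => a * g from funext h]
    exact IsColourPreserving.id.const_mul a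
  · rw [show ⇑φ = fun g => a * g⁻¹ from funext h]
    exact IsColourPreserving.id.inv.const_mul a

/-- For an abelian group with an element of order at least 3, the colour-preserving
automorphisms of the complete Cayley graph are exactly the maps `g ↦ a g` and
`g ↦ a g⁻¹`, and the two families are disjoint, so the translations form an
index-2 subgroup. -/
theorem Xi_of_abelian {G : Type*} [CommGroup G] (g0 : G)
    (hg0 : g0 ≠ 1) (hg0' : g0 ^ 2 ≠ 1) :
    (∀ φ : Equiv.Perm G,
      (∀ g h : G, φ (g * h) = φ g * h ∨ φ (g * h) = φ g * h⁻¹) ↔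
        ∃ a : G, (∀ g : G, φ g = a * g) ∨ (∀ g : G, φ g = a * g⁻¹)) ∧
    (∀ a b : G, (fun g : G => a * g⁻¹) ≠ (fun g : G => b * g)) :=
  Xi_of_abelian_general g0 hg0'
end

section
/- Let G be any group and B a Boolean group. Then the stabilizer of the identity in Ξ_{G×B} is exactly { (g,b) ↦ (φ(g), b) : φ ∈ ξ_G }, where ξ_G is the stabilizer of the identity in Ξ_G. Consequently Ξ_{G×B} ≅ Ξ_G × B. -/
/-- The group `Ξ_G` of colour-preserving automorphisms of the complete Cayley graph. -/
def Xi (G : Type*) [Group G] : Subgroup (Equiv.Perm G) where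
  carrier := {φ | ∀ g h : G, φ (g * h) = φ g * h ∨ φ (g * h) = φ g * h⁻¹}
  one_mem' := fun _ _ => Or.inl rfl
  mul_mem' := by
    intro φ ψ hφ hψ g h
    simp only [Equiv.Perm.coe_mul, Function.comp_apply]
    rcases hψ g h with h1 | h1 <;> rw [h1]
    · exact hφ (ψ g) h
    · rcases hφ (ψ g) h⁻¹ with h2 | h2 <;> rw [h2] <;> simp [or_comm]
  inv_mem' := by
    intro φ hφ g h
    have key : φ (φ⁻¹ g * h) = g * h ∨ φ (φ⁻¹ g * h) = g * h⁻¹ := by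
      simpa using hφ (φ⁻¹ g) h
    have key' : φ (φ⁻¹ g * h⁻¹) = g * h⁻¹ ∨ φ (φ⁻¹ g * h⁻¹) = g * h := by
      rcases hφ (φ⁻¹ g) h⁻¹ with h2 | h2 <;> rw [h2] <;> simp
    rcases key with h1 | h1
    · left
      have := congrArg (φ⁻¹ : Equiv.Perm G) h1
      simpa using this.symm
    · rcases key' with h2 | h2
      · right
        have h3 : φ (φ⁻¹ g * h) = φ (φ⁻¹ g * h⁻¹) := by rw [h1, h2]
        have hh : h = h⁻¹ := mul_left_cancel (φ.injective h3)
        rw [← hh]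
        have h1' : φ (φ⁻¹ g * h) = g * h := by rw [h1, ← hh]
        have := congrArg (φ⁻¹ : Equiv.Perm G) h1'
        simpa using this.symm
      · right
        have := congrArg (φ⁻¹ : Equiv.Perm G) h2
        simpa using this.symm

/-- The stabilizer `ξ_G` of the identity in `Ξ_G`. -/
def XiStab (G : Type*) [Group G] : Subgroup (Equiv.Perm G) :=
  Xi G ⊓ MulAction.stabilizer (Equiv.Perm G) (1 : G)

/-! For Boolean `B`, multiplying by `q = (h, c)` or by `q⁻¹ = (h⁻¹, c)` has the same effect on
the `B`-coordinate, so an element `Φ` of `Ξ_{G×B}` acts on `B` as the translation by `b = (Φ 1).2`;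
and comparing `Φ (g, 1)` with `Φ ((g, 1) * (1, c))` shows that the `G`-coordinate of `Φ (g, c)` does
not depend on `c`. Hence `Φ = φ × (b * ·)` with `φ ∈ Ξ_G`, and conversely every such map lies in
`Ξ_{G×B}`. This identifies `Ξ_{G×B}` with `Ξ_G × B`, and `Φ` fixes `1` iff `φ 1 = 1` and `b = 1`. -/

open Equiv

namespace Xi

variable {G B : Type*} [Group G] [Group B]

theorem fst_apply_eq_fst_apply_mk_one {Φ : Perm (G × B)} (hΦ : Φ ∈ Xi (G × B)) (g : G) (c : B) :
    (Φ (g, c)).1 = (Φ (g, 1)).1 := by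
  rcases hΦ (g, 1) (1, c) with h | h <;> simp_all

theorem snd_apply_eq_mul (hB : ∀ b : B, b⁻¹ = b) {Φ : Perm (G × B)} (hΦ : Φ ∈ Xi (G × B))
    (p : G × B) : (Φ p).2 = (Φ 1).2 * p.2 := by
  rcases hΦ 1 p with h | h <;> simp_all

theorem prodCongr_mulLeft_mem (hB : ∀ b : B, b⁻¹ = b) {φ : Perm G} (hφ : φ ∈ Xi G) (b : B) :
    φ.prodCongr (Equiv.mulLeft b) ∈ Xi (G × B) := by
  intro p q
  rcases hφ p.1 q.1 with h | h
  · left; simp [Prod.ext_iff, h, mul_assoc]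
  · right; simp [Prod.ext_iff, h, hB, mul_assoc]

theorem exists_eq_prodCongr_mulLeft (hB : ∀ b : B, b⁻¹ = b) {Φ : Perm (G × B)}
    (hΦ : Φ ∈ Xi (G × B)) : ∃ φ ∈ Xi G, Φ = φ.prodCongr (Equiv.mulLeft (Φ 1).2) := by
  set f : G → G := fun g => (Φ (g, 1)).1
  have hΦf : ∀ p : G × B, Φ p = (f p.1, (Φ 1).2 * p.2) := fun p =>
    Prod.ext (fst_apply_eq_fst_apply_mk_one hΦ p.1 p.2) (snd_apply_eq_mul hB hΦ p)
  have hf : Function.Bijective f := by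
    refine ⟨fun g g' hgg' => ?_, fun x => ⟨(Φ.symm (x, (Φ 1).2)).1, ?_⟩⟩
    · have : Φ (g, 1) = Φ (g', 1) := by rw [hΦf (g, 1), hΦf (g', 1)]; simp [hgg']
      simpa using Φ.injective this
    · simpa using (congrArg Prod.fst (hΦf (Φ.symm (x, (Φ 1).2)))).symm
  refine ⟨Equiv.ofBijective f hf, fun g h => ?_, Equiv.ext hΦf⟩
  rcases hΦ (g, 1) (h, 1) with e | e
  · left; simpa [f] using congrArg Prod.fst e
  · right; simpa [f] using congrArg Prod.fst e

def prodHom (hB : ∀ b : B, b⁻¹ = b) : Xi G × B →* Xi (G × B) where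
  toFun x := ⟨(x.1 : Perm G).prodCongr (Equiv.mulLeft x.2), prodCongr_mulLeft_mem hB x.1.2 x.2⟩
  map_one' := by ext <;> simp
  map_mul' x y := by ext <;> simp [mul_assoc]

theorem prodHom_bijective (hB : ∀ b : B, b⁻¹ = b) :
    Function.Bijective (prodHom (G := G) hB) := by
  refine ⟨fun x y hxy => ?_, fun Φ => ?_⟩
  · have hxy' : ∀ p : G × B, ((x.1 : Perm G) p.1, x.2 * p.2) = ((y.1 : Perm G) p.1, y.2 * p.2) :=
      fun p => congrArg (fun Ψ : Xi (G × B) => (Ψ : Perm (G × B)) p) hxy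
    refine Prod.ext (Subtype.ext (Equiv.ext fun g => ?_)) ?_
    · exact congrArg Prod.fst (hxy' (g, 1))
    · simpa using congrArg Prod.snd (hxy' 1)
  · obtain ⟨Φ, hΦ⟩ := Φ
    obtain ⟨φ, hφ, hΦφ⟩ := exists_eq_prodCongr_mulLeft hB hΦ
    exact ⟨(⟨φ, hφ⟩, (Φ 1).2), Subtype.ext hΦφ.symm⟩

theorem mem_XiStab_prod_iff (hB : ∀ b : B, b⁻¹ = b) (Φ : Perm (G × B)) :
    Φ ∈ XiStab (G × B) ↔ ∃ φ : Perm G, φ ∈ XiStab G ∧ ∀ p : G × B, Φ p = (φ p.1, p.2) := by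
  simp only [XiStab, Subgroup.mem_inf, MulAction.mem_stabilizer_iff, Perm.smul_def]
  constructor
  · rintro ⟨hΦ, hΦ1⟩
    obtain ⟨φ, hφ, hΦφ⟩ := exists_eq_prodCongr_mulLeft hB hΦ
    have hφ1 : φ 1 = 1 := by
      simpa [hΦ1, eq_comm] using congrArg Prod.fst (Equiv.ext_iff.1 hΦφ 1)
    exact ⟨φ, ⟨hφ, hφ1⟩, fun p => by rw [hΦφ]; simp [hΦ1, Prod.map]⟩
  · rintro ⟨φ, ⟨hφ, hφ1⟩, hΦφ⟩
    have hΦ : Φ = φ.prodCongr (Equiv.mulLeft 1) := Equiv.ext fun p => by simp [hΦφ, Prod.map]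
    exact ⟨hΦ ▸ prodCongr_mulLeft_mem hB hφ 1, by simp [hΦφ, hφ1]⟩

end Xi

/-- For any group `G` and Boolean group `B`, the stabilizer of the identity in
`Ξ_{G×B}` consists exactly of the maps `(g,b) ↦ (φ g, b)` with `φ ∈ ξ_G`, and
consequently `Ξ_{G×B} ≅ Ξ_G × B`. -/
theorem xi_prod_boolean {G B : Type*} [Group G] [Group B]
    (hB : ∀ b : B, b ^ 2 = 1) :
    ((XiStab (G × B) : Set (Equiv.Perm (G × B)))
        = {Φ | ∃ φ : Equiv.Perm G, φ ∈ XiStab G ∧ ∀ p : G × B, Φ p = (φ p.1, p.2)}) ∧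
      Nonempty ((Xi (G × B)) ≃* (Xi G) × B) := by
  have hB' : ∀ b : B, b⁻¹ = b := fun b => inv_eq_of_mul_eq_one_right (by rw [← sq, hB])
  exact ⟨Set.ext (Xi.mem_XiStab_prod_iff hB'),
    ⟨(MulEquiv.ofBijective _ (Xi.prodHom_bijective hB')).symm⟩⟩
end

section
/- In the quaternion group Q8 = {±1, ±i, ±j, ±k}, for each choice of signs (ε_i, ε_j, ε_k) ∈ {−1,1}^3, the map φ sending ±x to ±x^{ε_x} for x ∈ {i,j,k} and fixing ±1 satisfies φ(gh) ∈ {φ(g)h, φ(g)h^{-1}} for all g, h ∈ Q8. These 8 maps form a group isomorphic to (Z/2Z)^3 and constitute exactly the stabilizer of 1 in Ξ_{Q8}. -/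
/-- In `Q₈` (with `±1 = a 0, a 2`, `±i = a 1, a 3`, `±j = xa 0, xa 2`,
`±k = xa 1, xa 3`), the map fixing `±1` and inverting the pairs `±i`, `±j`, `±k`
according to the signs `e = (ε_i, ε_j, ε_k)` (where `true` stands for `ε = 1`). -/
def phiQ8fun (e : Bool × Bool × Bool) : QuaternionGroup 2 → QuaternionGroup 2 :=
  fun g =>
    match g with
    | .a i => if i = 1 ∨ i = 3 then (if e.1 then .a i else (QuaternionGroup.a i)⁻¹) else .a i
    | .xa i => if i = 0 ∨ i = 2 then (if e.2.1 then .xa i else (QuaternionGroup.xa i)⁻¹)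
        else (if e.2.2 then .xa i else (QuaternionGroup.xa i)⁻¹)

lemma phiQ8fun_involutive (e : Bool × Bool × Bool) : Function.Involutive (phiQ8fun e) := by
  obtain ⟨e1, e2, e3⟩ := e
  cases e1 <;> cases e2 <;> cases e3 <;> (intro x; revert x; decide)

/-- The permutation of `Q₈` associated to a choice of signs. -/
def phiQ8 (e : Bool × Bool × Bool) : Equiv.Perm (QuaternionGroup 2) :=
  (phiQ8fun_involutive e).toPerm

namespace XiStab

variable {G : Type*} [Group G] {φ ψ : Equiv.Perm G}

lemma mem_iff :
    φ ∈ XiStab G ↔ (∀ g h : G, φ (g * h) = φ g * h ∨ φ (g * h) = φ g * h⁻¹) ∧ φ 1 = 1 :=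
  Iff.rfl

lemma apply_one (hφ : φ ∈ XiStab G) : φ 1 = 1 := hφ.2

lemma apply_eq_or_eq_inv (hφ : φ ∈ XiStab G) (x : G) : φ x = x ∨ φ x = x⁻¹ := by
  simpa [apply_one hφ] using hφ.1 1 x

lemma apply_inv (hφ : φ ∈ XiStab G) (x : G) : φ x⁻¹ = (φ x)⁻¹ := by
  rcases apply_eq_or_eq_inv hφ x with hx | hx <;>
    rcases apply_eq_or_eq_inv hφ x⁻¹ with hx' | hx'
  · rw [hx, hx']
  · rw [hx', hx, inv_inv]
    exact (φ.injective (hx'.trans ((inv_inv x).trans hx.symm))).symm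
  · rw [hx', hx, inv_inv]
    exact (φ.injective (hx.trans hx'.symm)).symm
  · rw [hx', hx]

lemma apply_eq_self_of_inv_eq (hφ : φ ∈ XiStab G) {x : G} (hx : x⁻¹ = x) : φ x = x := by
  rcases apply_eq_or_eq_inv hφ x with h | h <;> rw [h]
  exact hx

end XiStab

def inversionParity {G : Type*} [Group G] [DecidableEq G] (φ : Equiv.Perm G) (x : G) : ZMod 2 :=
  if φ x = x then 0 else 1

section inversionParity

variable {G : Type*} [Group G] [DecidableEq G] {φ ψ : Equiv.Perm G}

lemma apply_eq_of_inversionParity_eq (hφ : φ ∈ XiStab G) (hψ : ψ ∈ XiStab G) {x : G}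
    (h : inversionParity φ x = inversionParity ψ x) : φ x = ψ x := by
  unfold inversionParity at h
  split_ifs at h with hφx hψx hψx
  · rw [hφx, hψx]
  · exact absurd h (by decide)
  · exact absurd h (by decide)
  · rw [(XiStab.apply_eq_or_eq_inv hφ x).resolve_left hφx,
      (XiStab.apply_eq_or_eq_inv hψ x).resolve_left hψx]

lemma inversionParity_mul (hφ : φ ∈ XiStab G) (hψ : ψ ∈ XiStab G) {x : G} (hx : x⁻¹ ≠ x) :
    inversionParity (φ * ψ) x = inversionParity φ x + inversionParity ψ x := by
  unfold inversionParity
  rw [Equiv.Perm.mul_apply]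
  rcases XiStab.apply_eq_or_eq_inv hψ x with hψx | hψx
  · rw [hψx, if_pos rfl, add_zero]
  · rw [hψx, XiStab.apply_inv hφ, if_neg hx]
    rcases XiStab.apply_eq_or_eq_inv hφ x with hφx | hφx
    · rw [hφx, if_neg hx, if_pos rfl, zero_add]
    · rw [hφx, inv_inv, if_pos rfl, if_neg hx]
      decide

end inversionParity

open QuaternionGroup

lemma XiStab_Q8_ext {φ ψ : Equiv.Perm (QuaternionGroup 2)} (hφ : φ ∈ XiStab _)
    (hψ : ψ ∈ XiStab _) (hi : φ (a 1) = ψ (a 1)) (hj : φ (xa 0) = ψ (xa 0))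
    (hk : φ (xa 1) = ψ (xa 1)) : φ = ψ := by
  have h₁ := (XiStab.apply_one hφ).trans (XiStab.apply_one hψ).symm
  have h₂ := (XiStab.apply_eq_self_of_inv_eq hφ (x := a 2) (by decide)).trans
    (XiStab.apply_eq_self_of_inv_eq hψ (by decide)).symm
  ext g
  rcases g with n | n <;> fin_cases n
  · exact h₁
  · exact hi
  · exact h₂
  · show φ (a 1)⁻¹ = ψ (a 1)⁻¹
    rw [XiStab.apply_inv hφ, XiStab.apply_inv hψ, hi]
  · exact hj
  · exact hk
  · show φ (xa 0)⁻¹ = ψ (xa 0)⁻¹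
    rw [XiStab.apply_inv hφ, XiStab.apply_inv hψ, hj]
  · show φ (xa 1)⁻¹ = ψ (xa 1)⁻¹
    rw [XiStab.apply_inv hφ, XiStab.apply_inv hψ, hk]

def inversionParities (φ : Equiv.Perm (QuaternionGroup 2)) : ZMod 2 × ZMod 2 × ZMod 2 :=
  (inversionParity φ (a 1), inversionParity φ (xa 0), inversionParity φ (xa 1))

lemma eq_of_inversionParities_eq {φ ψ : Equiv.Perm (QuaternionGroup 2)} (hφ : φ ∈ XiStab _)
    (hψ : ψ ∈ XiStab _) (h : inversionParities φ = inversionParities ψ) : φ = ψ := by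
  simp only [inversionParities, Prod.mk.injEq] at h
  exact XiStab_Q8_ext hφ hψ (apply_eq_of_inversionParity_eq hφ hψ h.1)
    (apply_eq_of_inversionParity_eq hφ hψ h.2.1) (apply_eq_of_inversionParity_eq hφ hψ h.2.2)

lemma phiQ8_mem_XiStab : ∀ e, phiQ8 e ∈ XiStab (QuaternionGroup 2) := by
  simp only [XiStab.mem_iff]
  decide

lemma inversionParities_phiQ8_surjective : Function.Surjective (inversionParities ∘ phiQ8) := by
  decide

lemma exists_phiQ8_eq {φ : Equiv.Perm (QuaternionGroup 2)} (hφ : φ ∈ XiStab _) :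
    ∃ e, phiQ8 e = φ := by
  obtain ⟨e, he⟩ := inversionParities_phiQ8_surjective (inversionParities φ)
  exact ⟨e, eq_of_inversionParities_eq (phiQ8_mem_XiStab e) hφ he⟩

def inversionParitiesHom :
    XiStab (QuaternionGroup 2) →* Multiplicative (ZMod 2 × ZMod 2 × ZMod 2) where
  toFun φ := Multiplicative.ofAdd (inversionParities φ)
  map_one' := rfl
  map_mul' φ ψ := by
    have hmul x (hx : x⁻¹ ≠ x) := inversionParity_mul φ.2 ψ.2 hx
    exact Prod.ext (hmul _ (by decide)) (Prod.ext (hmul _ (by decide)) (hmul _ (by decide)))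

lemma inversionParitiesHom_bijective : Function.Bijective inversionParitiesHom := by
  refine ⟨fun φ ψ h => Subtype.ext (eq_of_inversionParities_eq φ.2 ψ.2 h), fun t => ?_⟩
  obtain ⟨e, he⟩ := inversionParities_phiQ8_surjective (Multiplicative.toAdd t)
  exact ⟨⟨phiQ8 e, phiQ8_mem_XiStab e⟩, he⟩

/-- The eight maps `φ_{(ε_i, ε_j, ε_k)}` are colour-preserving, they are exactly the
stabilizer of `1` in `Ξ_{Q₈}`, and they form a group isomorphic to `(ℤ/2ℤ)³`. -/
theorem xi_Q8 :
    (∀ e : Bool × Bool × Bool, phiQ8 e ∈ XiStab (QuaternionGroup 2)) ∧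
    ((XiStab (QuaternionGroup 2) : Set (Equiv.Perm (QuaternionGroup 2)))
        = Set.range phiQ8) ∧
    Nonempty ((XiStab (QuaternionGroup 2)) ≃*
        Multiplicative (ZMod 2 × ZMod 2 × ZMod 2)) := by
  refine ⟨phiQ8_mem_XiStab, ?_, ⟨MulEquiv.ofBijective _ inversionParitiesHom_bijective⟩⟩
  ext φ
  exact ⟨exists_phiQ8_eq, by rintro ⟨e, rfl⟩; exact phiQ8_mem_XiStab e⟩
end

section
/- Let G be a group with symmetric generating sets S ⊆ T, and let S_0 ⊆ G. Suppose that every φ ∈ ξ_T with φ|_{S_0} = id satisfies φ|_{S ∪ S·S_0} = id. Then every φ ∈ ξ_T with φ|_{S_0} = id is the identity on all of G. -/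
/-!
If `φ ∈ ξ_T` fixes `S₀` and also fixes `x` and `x·S₀`, then its conjugate `z ↦ x⁻¹ φ(x z)` by the
left translation `x` is again in `ξ_T` and fixes `S₀`, since right multiplication commutes with left
translation. Hence the set of points fixed by every such `φ` is closed under left multiplication by
`S`; it contains `1`, so it is all of `G` once `S` generates `G`.
-/

open Pointwise Equiv

section

variable {G : Type*} [Group G]

def IsXiPerm (T : Set G) (φ : Perm G) : Prop :=
  φ 1 = 1 ∧ ∀ g : G, ∀ t ∈ T, φ (g * t) = φ g * t ∨ φ (g * t) = φ g * t⁻¹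

def xiFixedSet (T S₀ : Set G) : Set G :=
  {g | ∀ φ : Perm G, IsXiPerm T φ → (∀ s ∈ S₀, φ s = s) → φ g = g}

def Equiv.Perm.leftConj (x : G) (φ : Perm G) : Perm G :=
  ((Equiv.mulLeft x).trans φ).trans (Equiv.mulLeft x⁻¹)

@[simp]
theorem Equiv.Perm.leftConj_apply (x : G) (φ : Perm G) (z : G) :
    φ.leftConj x z = x⁻¹ * φ (x * z) :=
  rfl

theorem IsXiPerm.leftConj {T : Set G} {φ : Perm G} (hφ : IsXiPerm T φ) {x : G} (hx : φ x = x) :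
    IsXiPerm T (φ.leftConj x) := by
  refine ⟨by simp [hx], fun g t ht => ?_⟩
  simp only [Perm.leftConj_apply, mul_assoc, mul_right_inj]
  simpa only [mul_assoc] using hφ.2 (x * g) t ht

theorem mul_mem_xiFixedSet {T S₀ : Set G} {x y : G} (hx : x ∈ xiFixedSet T S₀)
    (hxS₀ : ∀ s ∈ S₀, x * s ∈ xiFixedSet T S₀) (hy : y ∈ xiFixedSet T S₀) :
    x * y ∈ xiFixedSet T S₀ := by
  intro φ hφ hφS₀
  have hφx : φ x = x := hx φ hφ hφS₀
  have hconjS₀ : ∀ s ∈ S₀, φ.leftConj x s = s := fun s hs => by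
    simp [hxS₀ s hs φ hφ hφS₀]
  have := hy _ (hφ.leftConj hφx) hconjS₀
  rwa [Perm.leftConj_apply, inv_mul_eq_iff_eq_mul] at this

theorem xiFixedSet_eq_univ {S T S₀ : Set G} (hSsymm : ∀ s ∈ S, s⁻¹ ∈ S)
    (hSgen : Subgroup.closure S = ⊤) (hprop : S ∪ S * S₀ ⊆ xiFixedSet T S₀) :
    xiFixedSet T S₀ = Set.univ := by
  have hstep : ∀ x ∈ S, ∀ y ∈ xiFixedSet T S₀, x * y ∈ xiFixedSet T S₀ := fun x hx y hy =>
    mul_mem_xiFixedSet (hprop (Or.inl hx))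
      (fun s hs => hprop (Or.inr (Set.mul_mem_mul hx hs))) hy
  refine Set.eq_univ_of_forall fun g => ?_
  have hg : g ∈ Subgroup.closure S := hSgen ▸ Subgroup.mem_top g
  induction hg using Subgroup.closure_induction_left with
  | one => exact fun φ hφ _ => hφ.1
  | mul_left x hx y _ ih => exact hstep x hx y ih
  | inv_mul_cancel x hx y _ ih => exact hstep x⁻¹ (hSsymm x hx) y ih

end

theorem xi_propagation_general {G : Type*} [Group G] (S T S₀ : Set G)
    (hSsymm : ∀ s ∈ S, s⁻¹ ∈ S)
    (hSgen : Subgroup.closure S = ⊤)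
    (hprop : ∀ φ : Equiv.Perm G, φ 1 = 1 →
      (∀ g : G, ∀ t ∈ T, φ (g * t) = φ g * t ∨ φ (g * t) = φ g * t⁻¹) →
      (∀ s ∈ S₀, φ s = s) → ∀ u ∈ S ∪ S * S₀, φ u = u) :
    ∀ φ : Equiv.Perm G, φ 1 = 1 →
      (∀ g : G, ∀ t ∈ T, φ (g * t) = φ g * t ∨ φ (g * t) = φ g * t⁻¹) →
      (∀ s ∈ S₀, φ s = s) → ∀ g : G, φ g = g := by
  have hfixed : S ∪ S * S₀ ⊆ xiFixedSet T S₀ := fun u hu φ hφ hφS₀ =>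
    hprop φ hφ.1 hφ.2 hφS₀ u hu
  intro φ hφ1 hφT hφS₀ g
  have hg : g ∈ xiFixedSet T S₀ := by simp [xiFixedSet_eq_univ hSsymm hSgen hfixed]
  exact hg φ ⟨hφ1, hφT⟩ hφS₀

/-- Propagation lemma: if triviality of `φ ∈ ξ_T` on `S₀` propagates to `S ∪ S·S₀`,
then it propagates to the whole group. -/
theorem xi_propagation {G : Type*} [Group G] (S T S₀ : Set G)
    (hSsymm : ∀ s ∈ S, s⁻¹ ∈ S) (hTsymm : ∀ t ∈ T, t⁻¹ ∈ T)
    (hSgen : Subgroup.closure S = ⊤) (hTgen : Subgroup.closure T = ⊤)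
    (hST : S ⊆ T)
    (hprop : ∀ φ : Equiv.Perm G, φ 1 = 1 →
      (∀ g : G, ∀ t ∈ T, φ (g * t) = φ g * t ∨ φ (g * t) = φ g * t⁻¹) →
      (∀ s ∈ S₀, φ s = s) → ∀ u ∈ S ∪ S * S₀, φ u = u) :
    ∀ φ : Equiv.Perm G, φ 1 = 1 →
      (∀ g : G, ∀ t ∈ T, φ (g * t) = φ g * t ∨ φ (g * t) = φ g * t⁻¹) →
      (∀ s ∈ S₀, φ s = s) → ∀ g : G, φ g = g :=
  xi_propagation_general S T S₀ hSsymm hSgen hprop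
end

section
/- Let G be an abelian group with a symmetric generating set S containing an element g_0 of order at least 3. Then every φ ∈ ξ_{S^{≤2}} is either the identity or the inversion map g ↦ g^{-1}; hence Ξ_{S^{≤2}} = G ⋊ {id, η}. -/
/-!
After a left translation, and possibly composing with inversion, we may assume that `φ` fixes
`1` and `g₀`. Fixing both `g` and `g * g₀` then propagates along every `S`-edge: the edge from `g`
gives `φ (g * s) ∈ {g * s, g * s⁻¹}`, the `S²`-edge from `g * g₀` with label `g₀⁻¹ * s` gives
`φ (g * s) ∈ {g * s, g * s⁻¹ * g₀ ^ 2}`, and `g₀ ^ 2 ≠ 1` leaves only `g * s`. Since `S` generates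
`G`, `φ` is the identity.
-/

open Pointwise

/-- `ξ_U` consists of the permutations `φ` with `φ 1 = 1` and `RespectsUpToInv U φ`. -/
def RespectsUpToInv {G : Type*} [Group G] (U : Set G) (φ : G → G) : Prop :=
  ∀ g : G, ∀ u ∈ U, φ (g * u) = φ g * u ∨ φ (g * u) = φ g * u⁻¹

namespace RespectsUpToInv

theorem mul_left {G : Type*} [Group G] {U : Set G} {φ : G → G} (h : RespectsUpToInv U φ)
    (a : G) : RespectsUpToInv U (fun g => a * φ g) := fun g u hu =>
  (h g u hu).imp (fun e => by dsimp only; rw [e, mul_assoc])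
    (fun e => by dsimp only; rw [e, mul_assoc])

variable {G : Type*} [CommGroup G] {U : Set G} {φ : G → G}

theorem inv (h : RespectsUpToInv U φ) : RespectsUpToInv U (fun g => (φ g)⁻¹) := fun g u hu =>
  (h g u hu).symm.imp (fun e => by dsimp only; rw [e, mul_inv, inv_inv])
    (fun e => by dsimp only; rw [e, mul_inv])

theorem apply_mul_eq_of_apply_eq {a c u : G} (h : RespectsUpToInv U φ) (hc : c ^ 2 ≠ 1)
    (hu : u ∈ U) (hcu : c⁻¹ * u ∈ U) (ha : φ a = a) (hac : φ (a * c) = a * c) :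
    φ (a * u) = a * u := by
  have hmul : a * c * (c⁻¹ * u) = a * u := by group
  have hflip : a * c * (c⁻¹ * u)⁻¹ = a * u⁻¹ * c ^ 2 := by
    rw [mul_inv_rev, inv_inv, mul_right_comm a c]; simp only [pow_two, mul_assoc]
  have h₂ := h (a * c) (c⁻¹ * u) hcu
  rw [hmul, hac, hmul, hflip] at h₂
  rcases h a u hu with h₁ | h₁
  · rwa [ha] at h₁
  rw [ha] at h₁
  exact h₂.resolve_right fun h₂ => hc (left_eq_mul.mp (h₁.symm.trans h₂))

variable {S : Set G}

theorem eq_id_of_apply_eq (hSsymm : ∀ s ∈ S, s⁻¹ ∈ S) (hSgen : Subgroup.closure S = ⊤)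
    {c : G} (hcS : c ∈ S) (hc : c ^ 2 ≠ 1) (h : RespectsUpToInv (S ∪ S * S) φ) (h1 : φ 1 = 1)
    (hφc : φ c = c) (g : G) : φ g = g := by
  have propagate {x s : G} (hs : s ∈ S) (hx : φ x = x ∧ φ (x * c) = x * c) :
      φ (x * s) = x * s ∧ φ (x * s * c) = x * s * c := by
    refine ⟨h.apply_mul_eq_of_apply_eq hc (.inl hs) (.inr ?_) hx.1 hx.2, ?_⟩
    · exact Set.mul_mem_mul (hSsymm c hcS) hs
    · have hsc : c⁻¹ * (s * c) ∈ S ∪ S * S := by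
        rw [mul_comm s c, inv_mul_cancel_left]; exact .inl hs
      rw [mul_assoc]
      exact h.apply_mul_eq_of_apply_eq hc (.inr (Set.mul_mem_mul hs hcS)) hsc hx.1 hx.2
  have hg : g ∈ Subgroup.closure S := hSgen ▸ Subgroup.mem_top g
  suffices φ g = g ∧ φ (g * c) = g * c from this.1
  induction hg using Subgroup.closure_induction_right with
  | one => exact ⟨h1, by rwa [one_mul]⟩
  | mul_right x _ s hs ih => exact propagate hs ih
  | mul_inv_cancel x _ s hs ih => exact propagate (hSsymm s hs) ih

theorem eq_id_or_eq_inv (hSsymm : ∀ s ∈ S, s⁻¹ ∈ S) (hSgen : Subgroup.closure S = ⊤)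
    {c : G} (hcS : c ∈ S) (hc : c ^ 2 ≠ 1) (h : RespectsUpToInv (S ∪ S * S) φ)
    (h1 : φ 1 = 1) : (∀ g, φ g = g) ∨ ∀ g, φ g = g⁻¹ := by
  have hφc := h 1 c (.inl hcS)
  rw [one_mul, h1, one_mul, one_mul] at hφc
  rcases hφc with hφc | hφc
  · exact .inl (eq_id_of_apply_eq hSsymm hSgen hcS hc h h1 hφc)
  · refine .inr fun g => inv_eq_iff_eq_inv.mp ?_
    refine eq_id_of_apply_eq hSsymm hSgen hcS hc h.inv ?_ ?_ g
    · simp only [h1, inv_one]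
    · simp only [hφc, inv_inv]

theorem exists_eq_mul_or_eq_mul_inv (hSsymm : ∀ s ∈ S, s⁻¹ ∈ S)
    (hSgen : Subgroup.closure S = ⊤) {c : G} (hcS : c ∈ S) (hc : c ^ 2 ≠ 1)
    (h : RespectsUpToInv (S ∪ S * S) φ) :
    ∃ a : G, (∀ g, φ g = a * g) ∨ ∀ g, φ g = a * g⁻¹ := by
  refine ⟨φ 1, ?_⟩
  have hnorm := eq_id_or_eq_inv hSsymm hSgen hcS hc (h.mul_left (φ 1)⁻¹) (inv_mul_cancel _)
  exact hnorm.imp (fun h' g => inv_mul_eq_iff_eq_mul.mp (h' g))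
    (fun h' g => inv_mul_eq_iff_eq_mul.mp (h' g))

end RespectsUpToInv

theorem xi_Ssq_of_abelian_general {G : Type*} [CommGroup G] (S : Set G)
    (hSsymm : ∀ s ∈ S, s⁻¹ ∈ S) (hSgen : Subgroup.closure S = ⊤)
    (g0 : G) (hg0S : g0 ∈ S) (hg0' : g0 ^ 2 ≠ 1) :
    (∀ φ : Equiv.Perm G, φ 1 = 1 →
      (∀ g : G, ∀ u ∈ S ∪ S * S, φ (g * u) = φ g * u ∨ φ (g * u) = φ g * u⁻¹) →
      (∀ g : G, φ g = g) ∨ (∀ g : G, φ g = g⁻¹)) ∧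
    (∀ φ : Equiv.Perm G,
      (∀ g : G, ∀ u ∈ S ∪ S * S, φ (g * u) = φ g * u ∨ φ (g * u) = φ g * u⁻¹) →
      ∃ a : G, (∀ g : G, φ g = a * g) ∨ (∀ g : G, φ g = a * g⁻¹)) :=
  ⟨fun _ h1 h => RespectsUpToInv.eq_id_or_eq_inv hSsymm hSgen hg0S hg0' h h1,
    fun _ h => RespectsUpToInv.exists_eq_mul_or_eq_mul_inv hSsymm hSgen hg0S hg0' h⟩

/-- For an abelian group `G` with a symmetric generating set `S` containing an
element of order at least 3, every element of `ξ_{S^{≤2}}` is the identity or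
inversion, and hence `Ξ_{S^{≤2}} = G ⋊ {id, η}`. -/
theorem xi_Ssq_of_abelian {G : Type*} [CommGroup G] (S : Set G)
    (hSsymm : ∀ s ∈ S, s⁻¹ ∈ S) (hSgen : Subgroup.closure S = ⊤)
    (g0 : G) (hg0S : g0 ∈ S) (hg0 : g0 ≠ 1) (hg0' : g0 ^ 2 ≠ 1) :
    (∀ φ : Equiv.Perm G, φ 1 = 1 →
      (∀ g : G, ∀ u ∈ S ∪ S * S, φ (g * u) = φ g * u ∨ φ (g * u) = φ g * u⁻¹) →
      (∀ g : G, φ g = g) ∨ (∀ g : G, φ g = g⁻¹)) ∧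
    (∀ φ : Equiv.Perm G,
      (∀ g : G, ∀ u ∈ S ∪ S * S, φ (g * u) = φ g * u ∨ φ (g * u) = φ g * u⁻¹) →
      ∃ a : G, (∀ g : G, φ g = a * g) ∨ (∀ g : G, φ g = a * g⁻¹)) :=
  xi_Ssq_of_abelian_general S hSsymm hSgen g0 hg0S hg0'
end

section
/- Let G be a finitely generated group such that the stabilizer ξ_G of the identity in Ξ_G = Aut of the colour-preserving complete Cayley graph is finite. Then there exists a finite symmetric generating set S of G such that ξ_S = ξ_G. -/
/-!
Let `S₀ ∋ 1` be a finite symmetric generating set. Every `φ ∈ ξ_{S₀}` maps each (finite) ball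
`S₀ ^ n` into itself, so by compactness (an ultrafilter limit) any sequence `φ_N ∈ ξ_{S₀ ^ N}`
has a pointwise limit in `ξ_G`. As `ξ_G` is finite, there is a radius `k` such that only the
identity of `ξ_G` fixes `S₀ ^ k` pointwise.

If `ξ_{S₀ ^ N} ≠ ξ_G` for all `N`, pick `φ_N ∈ ξ_{S₀ ^ N} \ ξ_G` with limit `ω`. Then
`ω⁻¹ φ_N` is nontrivial and eventually fixes `S₀ ^ k`; re-centring it at a suitable point by left
translations gives `τ_N ∈ ξ_{S₀ ^ N}` fixing `S₀ ^ k` but moving a point of `S₀ ^ (k + 1)`.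
A limit of the `τ_N` lies in `ξ_G` and fixes `S₀ ^ k`, so it is the identity, yet it moves a point
of the finite set `S₀ ^ (k + 1)`.
-/

open Pointwise Filter Function

namespace CayleyColour

variable {G : Type*} [Group G]

def xi (S : Set G) : Set (Equiv.Perm G) :=
  {φ | φ 1 = 1 ∧ ∀ g : G, ∀ s ∈ S, φ (g * s) = φ g * s ∨ φ (g * s) = φ g * s⁻¹}

lemma xi_univ : xi (Set.univ : Set G) =
    {φ | φ 1 = 1 ∧ ∀ g h : G, φ (g * h) = φ g * h ∨ φ (g * h) = φ g * h⁻¹} := by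
  simp [xi]

lemma xi_anti {S T : Set G} (hST : S ⊆ T) : xi T ⊆ xi S :=
  fun _ hφ => ⟨hφ.1, fun g s hs => hφ.2 g s (hST hs)⟩

section Symmetric

variable {S : Set G} (hS : S⁻¹ = S)
include hS

lemma mul_mem_xi {φ ψ : Equiv.Perm G} (hφ : φ ∈ xi S) (hψ : ψ ∈ xi S) : φ * ψ ∈ xi S := by
  refine ⟨by simp [hφ.1, hψ.1], fun g s hs => ?_⟩
  have hs' : s⁻¹ ∈ S := by rwa [← Set.mem_inv, hS]
  simp only [Equiv.Perm.mul_apply]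
  rcases hψ.2 g s hs with h | h <;> rw [h]
  · exact hφ.2 _ s hs
  · simpa [or_comm] using hφ.2 (ψ g) s⁻¹ hs'

lemma inv_mem_xi {φ : Equiv.Perm G} (hφ : φ ∈ xi S) : φ⁻¹ ∈ xi S := by
  refine ⟨by rw [Equiv.Perm.inv_eq_iff_eq, hφ.1], fun y s hs => ?_⟩
  have hs' : s⁻¹ ∈ S := by rwa [← Set.mem_inv, hS]
  obtain ⟨a, rfl⟩ := φ.surjective y
  simp only [Equiv.Perm.coe_inv, Equiv.symm_apply_apply, Equiv.symm_apply_eq]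
  rcases hφ.2 a s hs with h | h
  · exact .inl h.symm
  rcases hφ.2 a s⁻¹ hs' with h' | h'
  · -- both `a * s` and `a * s⁻¹` go to `φ a * s⁻¹`, so `s = s⁻¹`
    have hss : s = s⁻¹ := mul_left_cancel (φ.injective (h.trans h'.symm))
    exact .inl (by rw [h, ← hss])
  · exact .inr (by rw [h', inv_inv])

end Symmetric

def leftTranslate (σ : Equiv.Perm G) (h : G) : Equiv.Perm G :=
  (Equiv.mulLeft h).trans (σ.trans (Equiv.mulLeft (σ h)⁻¹))

@[simp]
lemma leftTranslate_apply (σ : Equiv.Perm G) (h x : G) :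
    leftTranslate σ h x = (σ h)⁻¹ * σ (h * x) := rfl

lemma leftTranslate_mem_xi {S : Set G} {σ : Equiv.Perm G} (hσ : σ ∈ xi S) (h : G) :
    leftTranslate σ h ∈ xi S := by
  refine ⟨by simp, fun g s hs => ?_⟩
  simp only [leftTranslate_apply, ← mul_assoc]
  rcases hσ.2 (h * g) s hs with h' | h' <;> rw [h'] <;> simp [mul_assoc]

lemma bijective_of_map_mul_eq_or {f : G → G} (h1 : f 1 = 1)
    (hf : ∀ g h, f (g * h) = f g * h ∨ f (g * h) = f g * h⁻¹) : Bijective f := by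
  have hself : ∀ h, f h = h ∨ f h = h⁻¹ := fun h => by simpa [h1] using hf 1 h
  have hinj : Injective f := by
    intro a b hab
    obtain ⟨h, rfl⟩ : ∃ h, b = a * h := ⟨a⁻¹ * b, by group⟩
    suffices h = 1 by simp [this]
    rcases hf a h with h' | h' <;> rw [← hab, eq_comm, mul_eq_left] at h'
    exacts [h', inv_eq_one.1 h']
  refine ⟨hinj, fun y => ?_⟩
  rcases hself y with hy | hy
  · exact ⟨y, hy⟩
  rcases hself y⁻¹ with hy' | hy'
  · -- `f y = f y⁻¹` forces `y = y⁻¹`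
    exact ⟨y, by rw [hy, ← hinj (hy.trans hy'.symm)]⟩
  · exact ⟨y⁻¹, by rw [hy', inv_inv]⟩

section Balls

variable [DecidableEq G] {S₀ : Finset G}

lemma exists_mem_pow (hinv : S₀⁻¹ = S₀) (hgen : Subgroup.closure (S₀ : Set G) = ⊤) (g : G) :
    ∃ n, g ∈ S₀ ^ n := by
  induction (show g ∈ Subgroup.closure (S₀ : Set G) by simp [hgen])
    using Subgroup.closure_induction with
  | mem x hx => exact ⟨1, by simpa using hx⟩
  | one => exact ⟨0, by simp⟩
  | mul x y _ _ hx hy =>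
    obtain ⟨n, hn⟩ := hx
    obtain ⟨m, hm⟩ := hy
    exact ⟨n + m, by rw [pow_add]; exact Finset.mul_mem_mul hn hm⟩
  | inv x _ hx =>
    obtain ⟨n, hn⟩ := hx
    exact ⟨n, by simpa only [← inv_pow, hinv] using Finset.inv_mem_inv hn⟩

lemma eventually_mem_pow (h1 : 1 ∈ S₀) (hinv : S₀⁻¹ = S₀)
    (hgen : Subgroup.closure (S₀ : Set G) = ⊤) (g : G) : ∀ᶠ n in atTop, g ∈ S₀ ^ n :=
  let ⟨n, hn⟩ := exists_mem_pow hinv hgen g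
  eventually_atTop.2 ⟨n, fun _ hm => Finset.pow_subset_pow_right h1 hm hn⟩

lemma apply_mem_pow_of_mem_xi (hinv : S₀⁻¹ = S₀) {φ : Equiv.Perm G} (hφ : φ ∈ xi (S₀ : Set G))
    {n : ℕ} {g : G} (hg : g ∈ S₀ ^ n) : φ g ∈ S₀ ^ n := by
  induction n generalizing g with
  | zero => simp_all [hφ.1]
  | succ n ih =>
    rw [pow_succ, Finset.mem_mul] at hg ⊢
    obtain ⟨a, ha, s, hs, rfl⟩ := hg
    have hs' : s⁻¹ ∈ S₀ := by simpa [hinv] using Finset.inv_mem_inv hs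
    rcases hφ.2 a s hs with h | h <;> rw [h]
    exacts [⟨φ a, ih ha, s, hs, rfl⟩, ⟨φ a, ih ha, s⁻¹, hs', rfl⟩]

lemma exists_pow_forall_fixed_imp_eq_one (h1 : 1 ∈ S₀) (hinv : S₀⁻¹ = S₀)
    (hgen : Subgroup.closure (S₀ : Set G) = ⊤) {Φ : Set (Equiv.Perm G)} (hΦ : Φ.Finite) :
    ∃ k, ∀ ψ ∈ Φ, (∀ g ∈ S₀ ^ k, ψ g = g) → ψ = 1 := by
  suffices ∀ᶠ k in atTop, ∀ ψ ∈ Φ, (∀ g ∈ S₀ ^ k, ψ g = g) → ψ = 1 from this.exists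
  refine (eventually_all_finite hΦ).2 fun ψ _ => ?_
  by_cases hψ : ψ = 1
  · exact .of_forall fun _ _ => hψ
  obtain ⟨g, hg⟩ : ∃ g, ψ g ≠ g := by
    contrapose! hψ
    exact Equiv.ext hψ
  filter_upwards [eventually_mem_pow h1 hinv hgen g] with k hk hfix
  exact absurd (hfix g hk) hg

lemma exists_leftTranslate_fixed_pow_moved (h1 : 1 ∈ S₀) (hinv : S₀⁻¹ = S₀)
    (hgen : Subgroup.closure (S₀ : Set G) = ⊤) {S : Set G} {σ : Equiv.Perm G} (hσ : σ ∈ xi S)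
    (hσ1 : σ ≠ 1) {k : ℕ} (hfix : ∀ g ∈ S₀ ^ k, σ g = g) :
    ∃ τ ∈ xi S, (∀ g ∈ S₀ ^ k, τ g = g) ∧ ∃ x ∈ S₀ ^ (k + 1), τ x ≠ x := by
  by_contra! H
  -- Then `σ` fixes the balls layer by layer: `S₀ ^ (m + k + 1) = S₀ ^ m * S₀ ^ (k + 1)`, and
  -- re-centring `σ` at `h ∈ S₀ ^ m` turns the new layer into `S₀ ^ (k + 1)`.
  have hball : ∀ m, ∀ g ∈ S₀ ^ (m + k), σ g = g := by
    intro m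
    induction m with
    | zero => simpa using hfix
    | succ m ih =>
      intro g hg
      rw [show m + 1 + k = m + (k + 1) by ring, pow_add, Finset.mem_mul] at hg
      obtain ⟨h, hh, x, hx, rfl⟩ := hg
      have hσh : σ h = h := ih h (Finset.pow_subset_pow_right h1 (by omega) hh)
      have hτ := H (leftTranslate σ h) (leftTranslate_mem_xi hσ h) (fun z hz => by
        simp [hσh, ih (h * z) (by rw [pow_add]; exact Finset.mul_mem_mul hh hz)]) x hx
      simpa [hσh, inv_mul_eq_iff_eq_mul] using hτ
  refine hσ1 (Equiv.ext fun g => ?_)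
  obtain ⟨n, hn⟩ := exists_mem_pow hinv hgen g
  exact hball n g (Finset.pow_subset_pow_right h1 (by omega) hn)

lemma exists_mem_xi_univ_eventually_eq (hinv : S₀⁻¹ = S₀)
    (hgen : Subgroup.closure (S₀ : Set G) = ⊤) {ι : Type*} (U : Ultrafilter ι)
    {τ : ι → Equiv.Perm G} (hτ : ∀ n, ∀ᶠ i in U, τ i ∈ xi (↑(S₀ ^ n) : Set G)) :
    ∃ ω ∈ xi (Set.univ : Set G), ∀ g, ∀ᶠ i in U, τ i g = ω g := by
  -- `τ i g` eventually ranges over a finite ball, so `U` singles out one value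
  have hconv : ∀ g, ∃ v, ∀ᶠ i in U, τ i g = v := by
    intro g
    obtain ⟨n, hn⟩ := exists_mem_pow hinv hgen g
    have hball : ∀ᶠ i in U, τ i g ∈ S₀ ^ n :=
      (hτ 1).mono fun i hi => apply_mem_pow_of_mem_xi hinv (by simpa using hi) hn
    obtain ⟨v, -, hv⟩ := (U.map (τ · g)).eq_pure_of_finite_mem (S₀ ^ n).finite_toSet hball
    exact ⟨v, Ultrafilter.mem_map.1 (hv ▸ Ultrafilter.mem_pure.2 rfl : {v} ∈ U.map (τ · g))⟩
  choose ω hω using hconv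
  have h1 : ω 1 = 1 := ((hω 1).and (hτ 0)).exists.elim fun i hi => hi.1 ▸ hi.2.1
  have hmul : ∀ g h, ω (g * h) = ω g * h ∨ ω (g * h) = ω g * h⁻¹ := by
    intro g h
    obtain ⟨n, hn⟩ := exists_mem_pow hinv hgen h
    obtain ⟨i, hgh, hg, hi⟩ := ((hω (g * h)).and ((hω g).and (hτ n))).exists
    rw [← hgh, ← hg]
    exact hi.2 g h hn
  refine ⟨Equiv.ofBijective ω (bijective_of_map_mul_eq_or h1 hmul), ?_, hω⟩
  rw [xi_univ]
  exact ⟨h1, hmul⟩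

lemma eventually_mem_xi_pow (h1 : 1 ∈ S₀) {l : Filter ℕ} (hl : l ≤ atTop)
    {τ : ℕ → Equiv.Perm G} (hτ : ∀ᶠ N in l, τ N ∈ xi (↑(S₀ ^ N) : Set G)) (n : ℕ) :
    ∀ᶠ N in l, τ N ∈ xi (↑(S₀ ^ n) : Set G) := by
  filter_upwards [hτ, hl (eventually_ge_atTop n)] with N hN hnN
  exact xi_anti (by exact_mod_cast Finset.pow_subset_pow_right h1 hnN) hN

lemma not_eventually_exists_fixed_pow_moved (h1 : 1 ∈ S₀) (hinv : S₀⁻¹ = S₀)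
    (hgen : Subgroup.closure (S₀ : Set G) = ⊤) {k : ℕ}
    (hk : ∀ ψ ∈ xi (Set.univ : Set G), (∀ g ∈ S₀ ^ k, ψ g = g) → ψ = 1)
    {U : Ultrafilter ℕ} (hU : (U : Filter ℕ) ≤ atTop) :
    ¬ ∀ᶠ N in U, ∃ τ ∈ xi (↑(S₀ ^ N) : Set G),
      (∀ g ∈ S₀ ^ k, τ g = g) ∧ ∃ x ∈ S₀ ^ (k + 1), τ x ≠ x := by
  intro h
  obtain ⟨τ, hτ⟩ := h.choice
  obtain ⟨ω, hω, hτω⟩ :=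
    exists_mem_xi_univ_eventually_eq hinv hgen U
      (eventually_mem_xi_pow h1 hU (hτ.mono fun _ h => h.1))
  have hω1 : ω = 1 := hk ω hω fun g hg =>
    ((hτω g).and hτ).exists.elim fun N hN => hN.1 ▸ hN.2.2.1 g hg
  obtain ⟨N, hfix, -, -, x, hx, hmove⟩ :=
    (((eventually_all_finset (S₀ ^ (k + 1))).2 fun g _ => hτω g).and hτ).exists
  exact hmove (by simpa [hω1] using hfix x hx)

lemma exists_pow_xi_eq_xi_univ (h1 : 1 ∈ S₀) (hinv : S₀⁻¹ = S₀)
    (hgen : Subgroup.closure (S₀ : Set G) = ⊤) (hfin : (xi (Set.univ : Set G)).Finite) :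
    ∃ N, xi (↑(S₀ ^ N) : Set G) = xi Set.univ := by
  obtain ⟨k, hk⟩ := exists_pow_forall_fixed_imp_eq_one h1 hinv hgen hfin
  have hsymm : ∀ N, (↑(S₀ ^ N) : Set G)⁻¹ = ↑(S₀ ^ N) := fun N => by
    rw [← Finset.coe_inv, ← inv_pow, hinv]
  by_contra! hne
  have hbad : ∀ N, ∃ φ ∈ xi (↑(S₀ ^ N) : Set G), φ ∉ xi Set.univ := fun N =>
    Set.not_subset.1 fun h => hne N (h.antisymm (xi_anti (Set.subset_univ _)))
  choose φ hφ hφ_univ using hbad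
  have hU : (hyperfilter ℕ : Filter ℕ) ≤ atTop :=
    hyperfilter_le_cofinite.trans Nat.cofinite_eq_atTop.le
  obtain ⟨ω, hω, hφω⟩ := exists_mem_xi_univ_eventually_eq hinv hgen (hyperfilter ℕ)
    (eventually_mem_xi_pow h1 hU (.of_forall hφ))
  refine not_eventually_exists_fixed_pow_moved h1 hinv hgen hk hU ?_
  filter_upwards [(eventually_all_finset (S₀ ^ k)).2 fun g _ => hφω g] with N hN
  have hω_inv : ω⁻¹ ∈ xi (↑(S₀ ^ N) : Set G) :=
    inv_mem_xi (hsymm N) (xi_anti (Set.subset_univ _) hω)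
  refine exists_leftTranslate_fixed_pow_moved h1 hinv hgen
    (mul_mem_xi (hsymm N) hω_inv (hφ N)) ?_ fun g hg => by simp [hN g hg]
  rw [Ne, inv_mul_eq_one]
  rintro rfl
  exact hφ_univ N hω

end Balls

end CayleyColour

open CayleyColour

/-- If `G` is finitely generated and the stabilizer `ξ_G` of the identity in the
colour-preserving automorphism group of the complete Cayley graph is finite, then
there is a finite symmetric generating set `S` with `ξ_S = ξ_G`. -/
theorem exists_finite_genset_xi_eq {G : Type*} [Group G] (hfg : Group.FG G)
    (hfin : {φ : Equiv.Perm G | φ 1 = 1 ∧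
      ∀ g h : G, φ (g * h) = φ g * h ∨ φ (g * h) = φ g * h⁻¹}.Finite) :
    ∃ S : Finset G, (∀ s ∈ S, s⁻¹ ∈ S) ∧ Subgroup.closure (S : Set G) = ⊤ ∧
      {φ : Equiv.Perm G | φ 1 = 1 ∧
          ∀ g : G, ∀ s ∈ S, φ (g * s) = φ g * s ∨ φ (g * s) = φ g * s⁻¹}
        = {φ : Equiv.Perm G | φ 1 = 1 ∧
            ∀ g h : G, φ (g * h) = φ g * h ∨ φ (g * h) = φ g * h⁻¹} := by
  classical
  obtain ⟨T, hT⟩ := hfg.out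
  set S₀ : Finset G := insert 1 (T ∪ T⁻¹)
  have h1 : 1 ∈ S₀ := Finset.mem_insert_self _ _
  have hinv : S₀⁻¹ = S₀ := by ext; simp [S₀, or_comm]
  have hgen : Subgroup.closure (S₀ : Set G) = ⊤ :=
    eq_top_mono (Subgroup.closure_mono <| by
      exact_mod_cast Finset.subset_union_left.trans (Finset.subset_insert _ _)) hT
  obtain ⟨N, hN⟩ := exists_pow_xi_eq_xi_univ h1 hinv hgen (xi_univ (G := G) ▸ hfin)
  have hS₀ : S₀ ⊆ S₀ ^ (N + 1) := Finset.subset_pow h1 N.succ_ne_zero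
  refine ⟨S₀ ^ (N + 1), fun s hs => ?_, eq_top_mono (Subgroup.closure_mono hS₀) hgen, ?_⟩
  · simpa only [← inv_pow, hinv] using Finset.inv_mem_inv hs
  · rw [← xi_univ]
    exact (xi_anti (Set.subset_univ _)).antisymm' <|
      hN ▸ xi_anti (by exact_mod_cast Finset.pow_subset_pow_right h1 N.le_succ)
end

section
/- For i = 1, 2, let G_i be an abelian group with an element of order at least 3, and let G = G_1 × G_2 with generating set S = (S_1 × {1}) ∪ ({1} × S_2) where S_i generates G_i. Then the four maps id, η, η_1 × id, id × η_2 (where η_i is inversion on G_i and η is inversion on G) are pairwise distinct elements of ξ_S; in particular |ξ_S| ≥ 4 > |ξ_G| = 2. -/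
/-!
If `φ ∈ ξ_G` fixes an element `a` with `a ^ 2 ≠ 1`, then `φ (a * h)` lies both in
`{a * h, a * h⁻¹}` and in `{a * h, (a * h)⁻¹}`, and `a * h⁻¹ = a⁻¹ * h⁻¹` is excluded, so `φ = id`;
likewise `φ a = a⁻¹` forces `φ = η`. Hence `ξ_G = {id, η}`. For the product generating set, every
generator has a trivial coordinate, so inverting one coordinate only is still compatible with
all generators, which gives the extra elements `η₁ × id` and `id × η₂` of `ξ_S`.
-/

/-- The paper's `ξ_S`. -/
def colourStabilizer {G : Type*} [Group G] (S : Set G) : Set (Equiv.Perm G) :=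
  {φ | φ 1 = 1 ∧ ∀ g, ∀ s ∈ S, φ (g * s) = φ g * s ∨ φ (g * s) = φ g * s⁻¹}

lemma ne_inv_of_sq_ne_one {G : Type*} [Group G] {a : G} (ha : a ^ 2 ≠ 1) : a ≠ a⁻¹ :=
  fun h => ha (by rwa [sq, ← eq_inv_iff_mul_eq_one])

section Membership

variable {G : Type*}

lemma refl_mem_colourStabilizer [Group G] (S : Set G) : Equiv.refl G ∈ colourStabilizer S :=
  ⟨rfl, fun _ _ _ => Or.inl rfl⟩

lemma inv_mem_colourStabilizer [CommGroup G] (S : Set G) : Equiv.inv G ∈ colourStabilizer S :=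
  ⟨inv_one, fun g s _ => Or.inr (mul_inv g s)⟩

lemma prodCongr_mem_colourStabilizer {H : Type*} [Group G] [Group H] {S : Set G} {T : Set H}
    {φ : Equiv.Perm G} {ψ : Equiv.Perm H}
    (hφ : φ ∈ colourStabilizer S) (hψ : ψ ∈ colourStabilizer T) :
    φ.prodCongr ψ ∈ colourStabilizer (S ×ˢ {1} ∪ {1} ×ˢ T) := by
  refine ⟨Prod.ext hφ.1 hψ.1, ?_⟩
  rintro ⟨g, h⟩ ⟨s, t⟩ (⟨hs, (rfl : t = 1)⟩ | ⟨(rfl : s = 1), ht⟩)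
  · rcases hφ.2 g _ hs with e | e <;> simp [e]
  · rcases hψ.2 h _ ht with e | e <;> simp [e]

end Membership

namespace colourStabilizer

variable {G : Type*} [CommGroup G] {φ : Equiv.Perm G}

lemma apply_eq_self_or_inv (hφ : φ ∈ colourStabilizer (Set.univ : Set G)) (x : G) :
    φ x = x ∨ φ x = x⁻¹ := by
  simpa [hφ.1] using hφ.2 1 x trivial

lemma eq_refl_of_apply_eq_self (hφ : φ ∈ colourStabilizer (Set.univ : Set G)) {a : G}
    (ha : a ^ 2 ≠ 1) (hfix : φ a = a) : φ = Equiv.refl G := by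
  ext x
  obtain ⟨h, rfl⟩ : ∃ h, x = a * h := ⟨a⁻¹ * x, by group⟩
  rcases hφ.2 a h trivial with e | e
  · rwa [hfix] at e
  · rcases apply_eq_self_or_inv hφ (a * h) with e' | e'
    · exact e'
    · rw [e, hfix, mul_inv] at e'
      exact absurd (mul_right_cancel e') (ne_inv_of_sq_ne_one ha)

lemma eq_inv_of_apply_eq_inv (hφ : φ ∈ colourStabilizer (Set.univ : Set G)) {a : G}
    (ha : a ^ 2 ≠ 1) (hinv : φ a = a⁻¹) : φ = Equiv.inv G := by
  ext x
  obtain ⟨h, rfl⟩ : ∃ h, x = a * h := ⟨a⁻¹ * x, by group⟩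
  rcases hφ.2 a h trivial with e | e
  · rcases apply_eq_self_or_inv hφ (a * h) with e' | e'
    · rw [e, hinv] at e'
      exact absurd (mul_right_cancel e').symm (ne_inv_of_sq_ne_one ha)
    · exact e'
  · rw [e, hinv]
    exact (mul_inv a h).symm

end colourStabilizer

open colourStabilizer in
lemma colourStabilizer_univ {G : Type*} [CommGroup G] {a : G} (ha : a ^ 2 ≠ 1) :
    colourStabilizer (Set.univ : Set G) = {Equiv.refl G, Equiv.inv G} := by
  ext φ
  refine ⟨fun hφ => ?_, ?_⟩
  · rcases apply_eq_self_or_inv hφ a with e | e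
    · exact Or.inl (eq_refl_of_apply_eq_self hφ ha e)
    · exact Or.inr (eq_inv_of_apply_eq_inv hφ ha e)
  · rintro (rfl | rfl)
    exacts [refl_mem_colourStabilizer _, inv_mem_colourStabilizer _]

theorem xi_S_of_product_general {G₁ G₂ : Type*} [CommGroup G₁] [CommGroup G₂]
    (g₁ : G₁) (hg₁' : g₁ ^ 2 ≠ 1)
    (g₂ : G₂) (hg₂' : g₂ ^ 2 ≠ 1)
    (S₁ : Set G₁) (S₂ : Set G₂) :
    letI S : Set (G₁ × G₂) := (S₁ ×ˢ {1}) ∪ ({1} ×ˢ S₂)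
    letI xiS : Set (Equiv.Perm (G₁ × G₂)) := {φ | φ 1 = 1 ∧
      ∀ g : G₁ × G₂, ∀ s ∈ S, φ (g * s) = φ g * s ∨ φ (g * s) = φ g * s⁻¹}
    letI xiG : Set (Equiv.Perm (G₁ × G₂)) := {φ | φ 1 = 1 ∧
      ∀ g h : G₁ × G₂, φ (g * h) = φ g * h ∨ φ (g * h) = φ g * h⁻¹}
    letI e₀ : Equiv.Perm (G₁ × G₂) := Equiv.refl _
    letI e₁ : Equiv.Perm (G₁ × G₂) := Equiv.inv (G₁ × G₂)
    letI e₂ : Equiv.Perm (G₁ × G₂) := (Equiv.inv G₁).prodCongr (Equiv.refl G₂)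
    letI e₃ : Equiv.Perm (G₁ × G₂) := (Equiv.refl G₁).prodCongr (Equiv.inv G₂)
    e₀ ∈ xiS ∧ e₁ ∈ xiS ∧ e₂ ∈ xiS ∧ e₃ ∈ xiS ∧
      ([e₀, e₁, e₂, e₃] : List (Equiv.Perm (G₁ × G₂))).Nodup ∧
      xiG = {e₀, e₁} := by
  have hsq : ((g₁, 1) : G₁ × G₂) ^ 2 ≠ 1 := by simpa [Prod.ext_iff] using hg₁'
  have h₁ := ne_inv_of_sq_ne_one hg₁'
  have h₂ := ne_inv_of_sq_ne_one hg₂'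
  refine ⟨refl_mem_colourStabilizer _, inv_mem_colourStabilizer _,
    prodCongr_mem_colourStabilizer (inv_mem_colourStabilizer S₁) (refl_mem_colourStabilizer S₂),
    prodCongr_mem_colourStabilizer (refl_mem_colourStabilizer S₁) (inv_mem_colourStabilizer S₂),
    ?_, ?_⟩
  · refine List.Nodup.of_map (fun φ => (φ (g₁, 1), φ (1, g₂))) ?_
    simp [h₁, h₂, h₁.symm, h₂.symm]
  · rw [← colourStabilizer_univ hsq]
    ext
    simp [colourStabilizer]

/-- For `G = G₁ × G₂` a product of two abelian groups each having an element of
order at least 3, with generating set `S = (S₁ × {1}) ∪ ({1} × S₂)`, the four maps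
`id`, `η`, `η₁ × id`, `id × η₂` are pairwise distinct elements of `ξ_S`; in
particular `|ξ_S| ≥ 4 > 2 = |ξ_G|`. -/
theorem xi_S_of_product {G₁ G₂ : Type*} [CommGroup G₁] [CommGroup G₂]
    (g₁ : G₁) (hg₁ : g₁ ≠ 1) (hg₁' : g₁ ^ 2 ≠ 1)
    (g₂ : G₂) (hg₂ : g₂ ≠ 1) (hg₂' : g₂ ^ 2 ≠ 1)
    (S₁ : Set G₁) (S₂ : Set G₂)
    (hS₁ : Subgroup.closure S₁ = ⊤) (hS₂ : Subgroup.closure S₂ = ⊤) :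
    letI S : Set (G₁ × G₂) := (S₁ ×ˢ {1}) ∪ ({1} ×ˢ S₂)
    letI xiS : Set (Equiv.Perm (G₁ × G₂)) := {φ | φ 1 = 1 ∧
      ∀ g : G₁ × G₂, ∀ s ∈ S, φ (g * s) = φ g * s ∨ φ (g * s) = φ g * s⁻¹}
    letI xiG : Set (Equiv.Perm (G₁ × G₂)) := {φ | φ 1 = 1 ∧
      ∀ g h : G₁ × G₂, φ (g * h) = φ g * h ∨ φ (g * h) = φ g * h⁻¹}
    letI e₀ : Equiv.Perm (G₁ × G₂) := Equiv.refl _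
    letI e₁ : Equiv.Perm (G₁ × G₂) := Equiv.inv (G₁ × G₂)
    letI e₂ : Equiv.Perm (G₁ × G₂) := (Equiv.inv G₁).prodCongr (Equiv.refl G₂)
    letI e₃ : Equiv.Perm (G₁ × G₂) := (Equiv.refl G₁).prodCongr (Equiv.inv G₂)
    e₀ ∈ xiS ∧ e₁ ∈ xiS ∧ e₂ ∈ xiS ∧ e₃ ∈ xiS ∧
      ([e₀, e₁, e₂, e₃] : List (Equiv.Perm (G₁ × G₂))).Nodup ∧
      xiG = {e₀, e₁} :=
  xi_S_of_product_general g₁ hg₁' g₂ hg₂' S₁ S₂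
end

section
/- For n ≥ 2, the group H_n = ⟨s_1, …, s_n | s_i s_j s_i^{-1} = s_j^{-1} for all i ≠ j⟩ has order 2^{n+1}. -/
/-!
All squares `sᵢ²` coincide, so they are one central element `z` with `z² = 1`; it is nontrivial,
as the map to the central extension of `𝔽₂ⁿ` by `𝔽₂` with a suitable bilinear cocycle shows.
Modulo `⟨z⟩` the generators commute and square to `1`, so the quotient is an image of `𝔽₂ⁿ`;
the same extension maps it back onto `𝔽₂ⁿ`. Hence `|H_n| = 2 · 2ⁿ`.
-/

/-- The relators of `H_n = ⟨s₁, …, s_n ∣ sᵢ sⱼ sᵢ⁻¹ = sⱼ⁻¹ (i ≠ j)⟩`. -/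
def HnRels (n : ℕ) : Set (FreeGroup (Fin n)) :=
  {r | ∃ i j : Fin n, i ≠ j ∧
    r = FreeGroup.of i * FreeGroup.of j * (FreeGroup.of i)⁻¹ * FreeGroup.of j}

open Subgroup

section Group
variable {G : Type*} [Group G]

theorem isMulCommutative_of_closure_eq_top {s : Set G} (hs : closure s = ⊤)
    (hcomm : ∀ x ∈ s, ∀ y ∈ s, Commute x y) : IsMulCommutative G := by
  rw [← center_eq_top_iff, eq_top_iff, ← hs, closure_le, center_eq_iInf hs]
  intro x hx
  simp only [SetLike.mem_coe, mem_iInf, mem_centralizer_singleton_iff]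
  exact hcomm x hx

theorem Subgroup.normal_of_le_center {N : Subgroup G} (h : N ≤ center G) : N.Normal :=
  ⟨fun a ha g => by rwa [mem_center_iff.mp (h ha) g, mul_inv_cancel_right]⟩

theorem sq_eq_sq_of_conj_eq_inv {a b : G} (hab : a * b * a⁻¹ = b⁻¹)
    (hba : b * a * b⁻¹ = a⁻¹) : a ^ 2 = b ^ 2 := by
  have hb : b ^ 2 = b⁻¹ * a ^ 2 * b :=
    calc b ^ 2 = a * (b * a * b⁻¹) * b ^ 2 := by rw [hba]; group
      _ = (a * b * a⁻¹) * a ^ 2 * b := by group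
      _ = b⁻¹ * a ^ 2 * b := by rw [hab]
  calc a ^ 2 = b * (b⁻¹ * a ^ 2 * b) * b⁻¹ := by group
    _ = b ^ 2 := by rw [← hb]; group

theorem pow_four_eq_one_of_conj_eq_inv {a b : G} (hab : a * b * a⁻¹ = b⁻¹)
    (hsq : a ^ 2 = b ^ 2) : b ^ 4 = 1 := by
  have h : a * b ^ 2 * a⁻¹ = (b ^ 2)⁻¹ := by rw [← conj_pow, hab, inv_pow]
  rw [← hsq, ← pow_succ', pow_succ, mul_inv_cancel_right, hsq] at h
  rw [show 4 = 2 + 2 from rfl, pow_add, mul_eq_one_iff_eq_inv]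
  exact h

theorem commute_of_conj_eq_inv {a b : G} (hab : a * b * a⁻¹ = b⁻¹) (hb : b ^ 2 = 1) :
    Commute a b := by
  have hinv : b⁻¹ = b := inv_eq_of_mul_eq_one_left (by rwa [← sq])
  rwa [hinv, mul_inv_eq_iff_eq_mul] at hab

end Group

section CommGroup
variable {G ι : Type*} [CommGroup G] [Fintype ι] {m : ℕ} [NeZero m] {t : ι → G}

theorem surjective_prod_pow_val (hgen : closure (Set.range t) = ⊤) (ht : ∀ i, t i ^ m = 1) :
    Function.Surjective fun v : ι → ZMod m => ∏ i, t i ^ (v i).val := by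
  intro x
  obtain ⟨k, rfl⟩ := exists_of_mem_closure_range t x (hgen ▸ mem_top x)
  refine ⟨fun i => k i, Finset.prod_congr rfl fun i _ => ?_⟩
  rw [← zpow_natCast, ZMod.val_intCast, ← zpow_eq_zpow_emod' _ (ht i)]

theorem bijective_prod_pow_val [DecidableEq ι] (hgen : closure (Set.range t) = ⊤)
    (ht : ∀ i, t i ^ m = 1) (ψ : G →* Multiplicative (ι → ZMod m))
    (hψ : ∀ i, ψ (t i) = .ofAdd (Pi.single i 1)) :
    Function.Bijective fun v : ι → ZMod m => ∏ i, t i ^ (v i).val := by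
  refine ⟨Function.LeftInverse.injective (g := fun x => (ψ x).toAdd) fun v => ?_,
    surjective_prod_pow_val hgen ht⟩
  simp only [map_prod, map_pow, hψ, toAdd_prod, toAdd_pow, toAdd_ofAdd]
  simp_rw [← Pi.single_smul, nsmul_one, ZMod.natCast_zmod_val]
  exact Finset.univ_sum_single v
end CommGroup

section
variable {R M : Type*} [CommRing R] [AddCommGroup M] [Module R M]

@[ext]
structure CocycleExt (β : LinearMap.BilinForm R M) where
  c : R
  v : M

namespace CocycleExt
variable {β : LinearMap.BilinForm R M}

instance : Mul (CocycleExt β) := ⟨fun x y => ⟨x.c + y.c + β x.v y.v, x.v + y.v⟩⟩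
instance : One (CocycleExt β) := ⟨⟨0, 0⟩⟩
instance : Inv (CocycleExt β) := ⟨fun x => ⟨-x.c + β x.v x.v, -x.v⟩⟩

@[simp] theorem mul_c (x y : CocycleExt β) : (x * y).c = x.c + y.c + β x.v y.v := rfl
@[simp] theorem mul_v (x y : CocycleExt β) : (x * y).v = x.v + y.v := rfl
@[simp] theorem one_c : (1 : CocycleExt β).c = 0 := rfl
@[simp] theorem one_v : (1 : CocycleExt β).v = 0 := rfl
@[simp] theorem inv_c (x : CocycleExt β) : x⁻¹.c = -x.c + β x.v x.v := rfl
@[simp] theorem inv_v (x : CocycleExt β) : x⁻¹.v = -x.v := rfl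

instance : Group (CocycleExt β) where
  mul_assoc x y z := by ext <;> simp <;> abel
  one_mul x := by ext <;> simp
  mul_one x := by ext <;> simp
  inv_mul_cancel x := by ext <;> simp

def vHom : CocycleExt β →* Multiplicative M where
  toFun x := .ofAdd x.v
  map_one' := rfl
  map_mul' _ _ := rfl

@[simp] theorem vHom_apply (x : CocycleExt β) : vHom x = .ofAdd x.v := rfl

end CocycleExt

end

theorem PresentedGroup.closure_range_comp_of {α G : Type*} [Group G] {rels : Set (FreeGroup α)}
    {f : PresentedGroup rels →* G} (hf : Function.Surjective f) :
    closure (Set.range fun a => f (of a)) = ⊤ := by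
  rw [Set.range_comp' f, ← MonoidHom.map_closure, closure_range_of, ← MonoidHom.range_eq_map,
    MonoidHom.range_eq_top.mpr hf]

namespace HnRels
open PresentedGroup

variable {n : ℕ}

local notation "Hn" n => PresentedGroup (HnRels n)
local notation "s" => PresentedGroup.of (rels := HnRels _)

theorem conj_eq_inv {i j : Fin n} (h : i ≠ j) : s i * s j * (s i)⁻¹ = (s j)⁻¹ := by
  have := one_of_mem (rels := HnRels n) ⟨i, j, h, rfl⟩
  rw [map_mul, map_mul, map_mul, map_inv] at this
  exact mul_eq_one_iff_eq_inv.mp this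

theorem sq_eq_sq (i j : Fin n) : s i ^ 2 = s j ^ 2 := by
  rcases eq_or_ne i j with rfl | h
  · rfl
  · exact sq_eq_sq_of_conj_eq_inv (conj_eq_inv h) (conj_eq_inv h.symm)

theorem pow_four_eq_one [Nontrivial (Fin n)] (i : Fin n) : s i ^ 4 = 1 := by
  obtain ⟨j, hj⟩ := exists_ne i
  exact pow_four_eq_one_of_conj_eq_inv (conj_eq_inv hj) (sq_eq_sq j i)

theorem sq_mem_center (i : Fin n) : s i ^ 2 ∈ center (Hn n) := by
  rw [center_eq_iInf (closure_range_of _)]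
  simp only [mem_iInf, mem_centralizer_singleton_iff]
  rintro _ ⟨j, rfl⟩
  rw [sq_eq_sq i j]
  exact (Commute.self_pow (s j) 2).eq.symm

instance (i : Fin n) : (zpowers (s i ^ 2)).Normal :=
  normal_of_le_center (zpowers_le.mpr (sq_mem_center i))

-- `β(eᵢ, eᵢ) = 1` and `β(eᵢ, eⱼ) + β(eⱼ, eᵢ) = 1` for `i ≠ j`: exactly what makes `eᵢ ↦ (0, eᵢ)`
-- respect the relations while sending `sᵢ²` to the nontrivial central element `(1, 0)`.
def cocycle (n : ℕ) : LinearMap.BilinForm (ZMod 2) (Fin n → ZMod 2) :=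
  Matrix.toBilin' (.of fun i j => if j ≤ i then 1 else 0)

def toCocycleExt : (Hn n) →* CocycleExt (cocycle n) :=
  toGroup (f := fun i => ⟨0, Pi.single i 1⟩) <| by
    rintro _ ⟨i, j, hij, rfl⟩
    ext
    · simp only [map_mul, map_inv, FreeGroup.lift_apply_of, CocycleExt.mul_c, CocycleExt.inv_c,
        CocycleExt.mul_v, CocycleExt.inv_v]
      rcases hij.lt_or_gt with h | h <;> simp [cocycle, h.le, h.not_ge] <;> decide
    · simp [CharTwo.add_self_eq_zero]

theorem toCocycleExt_of (i : Fin n) : toCocycleExt (s i) = ⟨0, Pi.single i 1⟩ :=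
  toGroup.of _

theorem sq_ne_one (i : Fin n) : s i ^ 2 ≠ 1 := by
  intro h
  have := congrArg (fun x => (toCocycleExt x).c) h
  rw [pow_two, map_mul, toCocycleExt_of, map_one] at this
  simp only [CocycleExt.mul_c] at this
  simp [cocycle] at this

theorem card_zpowers_sq [Nontrivial (Fin n)] (i : Fin n) : Nat.card (zpowers (s i ^ 2)) = 2 := by
  rw [Nat.card_zpowers]
  exact orderOf_eq_prime (by rw [← pow_mul]; exact pow_four_eq_one i) (sq_ne_one i)

theorem mk_sq_eq_one (i j : Fin n) : QuotientGroup.mk' (zpowers (s i ^ 2)) (s j) ^ 2 = 1 := by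
  rw [← map_pow, QuotientGroup.mk'_apply, QuotientGroup.eq_one_iff, sq_eq_sq j i]
  exact mem_zpowers _

theorem isMulCommutative_quotient (i : Fin n) : IsMulCommutative ((Hn n) ⧸ zpowers (s i ^ 2)) := by
  refine isMulCommutative_of_closure_eq_top
    (closure_range_comp_of (QuotientGroup.mk'_surjective _)) ?_
  rintro _ ⟨j, rfl⟩ _ ⟨k, rfl⟩
  rcases eq_or_ne j k with rfl | h
  · exact Commute.refl _
  · exact commute_of_conj_eq_inv (by simp only [← map_mul, ← map_inv, conj_eq_inv h])
      (mk_sq_eq_one i k)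

open scoped IsMulCommutative in
theorem card_quotient (i : Fin n) :
    Nat.card ((Hn n) ⧸ zpowers (s i ^ 2)) = 2 ^ n := by
  have := isMulCommutative_quotient i
  have hker : zpowers (s i ^ 2) ≤ (CocycleExt.vHom.comp toCocycleExt).ker := by
    rw [zpowers_le, MonoidHom.mem_ker, MonoidHom.comp_apply, pow_two, map_mul, toCocycleExt_of,
      CocycleExt.vHom_apply, CocycleExt.mul_v, ofAdd_eq_one]
    ext
    simp [CharTwo.add_self_eq_zero]
  rw [← Nat.card_eq_of_bijective _ (bijective_prod_pow_val (m := 2)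
    (closure_range_comp_of (QuotientGroup.mk'_surjective _)) (mk_sq_eq_one i)
    (QuotientGroup.lift _ _ hker) fun j => ?_)]
  · simp
  · rw [QuotientGroup.mk'_apply, QuotientGroup.lift_mk, MonoidHom.comp_apply, toCocycleExt_of,
      CocycleExt.vHom_apply]

end HnRels

/-- For `n ≥ 2`, the group `H_n` has order `2^(n+1)`. -/
theorem card_Hn (n : ℕ) (hn : 2 ≤ n) :
    Nat.card (PresentedGroup (HnRels n)) = 2 ^ (n + 1) := by
  have : Nontrivial (Fin n) := Fin.nontrivial_iff_two_le.mpr hn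
  let i : Fin n := ⟨0, by omega⟩
  rw [(zpowers (PresentedGroup.of i ^ 2)).card_eq_card_quotient_mul_card_subgroup,
    HnRels.card_quotient, HnRels.card_zpowers_sq, pow_succ]
end
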